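/- arXiv:2306.08013 — 3 statements merged into one kernel-verified Lean document; each statement's English description precedes it below -/
import Mathlib

section
/- Let P be a Borel probability measure on ℝ^d such that for every x ∈ supp(P), liminf_{r→0} P(B(x,r))/r^d > 0. Let K : ℝ^d → ℝ be a nonnegative function with K(0) > 0 that is continuous at 0, and let {h_n}_{n∈ℕ} be a sequence with h_n > 0 and h_n → 0. Then for every x ∈ supp(P), liminf_{n→∞} p_{h_n}(x) > 0. -/
open MeasureTheory Metric Filter
open scoped ENNReal

/-!
If `K ≥ m > 0` on the ball `B(0, ε)`, then `p_h(x) ≥ m h^{-d} P(B(x, εh))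
= m ε^d · P(B(x, εh)) / (εh)^d`. Along `r = ε h_n → 0⁺` the last ratio is eventually above any
constant below its liminf, which is positive by hypothesis, so `p_{h_n}(x)` is eventually bounded
below by a positive constant.
-/

/-- The support of a measure `P`: points all of whose neighborhoods have positive mass. -/
def msupp {d : ℕ} (P : Measure (EuclideanSpace ℝ (Fin d))) : Set (EuclideanSpace ℝ (Fin d)) :=
  {x | ∀ r > 0, 0 < P (ball x r)}

/-- The average kernel density estimator `p_h(x) = ∫ h^{-d} K((x-y)/h) dP(y)`
(for a nonnegative kernel, as a Lebesgue integral). -/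
noncomputable def avgKDE {d : ℕ} (P : Measure (EuclideanSpace ℝ (Fin d)))
    (K : EuclideanSpace ℝ (Fin d) → ℝ) (h : ℝ) (x : EuclideanSpace ℝ (Fin d)) : ℝ≥0∞ :=
  ∫⁻ y, ENNReal.ofReal ((1 / h ^ d) * K (h⁻¹ • (x - y))) ∂P

section KernelDensityLowerBound

variable {d : ℕ} (P : Measure (EuclideanSpace ℝ (Fin d))) (K : EuclideanSpace ℝ (Fin d) → ℝ)

lemma ofReal_div_pow_mul_measure_ball_le_avgKDE {h ε m : ℝ} (hh : 0 < h)
    (hKm : ∀ u ∈ ball (0 : EuclideanSpace ℝ (Fin d)) ε, m ≤ K u) (x : EuclideanSpace ℝ (Fin d)) :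
    ENNReal.ofReal (m / h ^ d) * P (ball x (ε * h)) ≤ avgKDE P K h x := by
  calc ENNReal.ofReal (m / h ^ d) * P (ball x (ε * h))
      = ∫⁻ _ in ball x (ε * h), ENNReal.ofReal (1 / h ^ d * m) ∂P := by
        rw [setLIntegral_const, one_div_mul_eq_div]
    _ ≤ ∫⁻ y in ball x (ε * h), ENNReal.ofReal (1 / h ^ d * K (h⁻¹ • (x - y))) ∂P := by
        refine setLIntegral_mono' measurableSet_ball fun y hy => ?_
        refine ENNReal.ofReal_le_ofReal (mul_le_mul_of_nonneg_left (hKm _ ?_) (by positivity))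
        rw [mem_ball_zero_iff, norm_smul, norm_inv, Real.norm_of_nonneg hh.le, ← dist_eq_norm,
          inv_mul_lt_iff₀ hh, mul_comm h, dist_comm]
        exact mem_ball.mp hy
    _ ≤ avgKDE P K h x := setLIntegral_le_lintegral _ _

lemma ofReal_mul_ball_ratio_le_avgKDE {h ε m : ℝ} (hh : 0 < h) (hε : 0 < ε)
    (hKm : ∀ u ∈ ball (0 : EuclideanSpace ℝ (Fin d)) ε, m ≤ K u) (x : EuclideanSpace ℝ (Fin d)) :
    ENNReal.ofReal (m * ε ^ d) * (P (ball x (ε * h)) / ENNReal.ofReal ((ε * h) ^ d))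
      ≤ avgKDE P K h x := by
  have hscale : ENNReal.ofReal (m * ε ^ d) / ENNReal.ofReal ((ε * h) ^ d)
      = ENNReal.ofReal (m / h ^ d) := by
    rw [← ENNReal.ofReal_div_of_pos (by positivity)]
    congr 1
    field_simp
    ring
  rw [← mul_div_assoc, ENNReal.mul_div_right_comm, hscale]
  exact ofReal_div_pow_mul_measure_ball_le_avgKDE P K hh hKm x

end KernelDensityLowerBound

theorem stmt0_general {d : ℕ} (P : Measure (EuclideanSpace ℝ (Fin d)))
    (hP : ∀ x ∈ msupp P,
      0 < liminf (fun r : ℝ => P (ball x r) / ENNReal.ofReal (r ^ d))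
        (nhdsWithin (0 : ℝ) (Set.Ioi 0)))
    (K : EuclideanSpace ℝ (Fin d) → ℝ) (hKpos : 0 < K 0)
    (hKcont : ContinuousAt K 0)
    (h : ℕ → ℝ) (hhpos : ∀ n, 0 < h n) (hhlim : Tendsto h atTop (nhds 0)) :
    ∀ x ∈ msupp P, 0 < liminf (fun n => avgKDE P K (h n) x) atTop := by
  intro x hx
  obtain ⟨ε, hε, hKε⟩ : ∃ ε > 0, ∀ u ∈ ball 0 ε, K 0 / 2 ≤ K u := by
    have hK : ∀ᶠ u in nhds 0, K 0 / 2 < K u := hKcont.eventually_const_lt (half_lt_self hKpos)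
    obtain ⟨ε, hε, hball⟩ := Metric.eventually_nhds_iff_ball.mp hK
    exact ⟨ε, hε, fun u hu => (hball u hu).le⟩
  obtain ⟨a, ha0, ha⟩ := exists_between (hP x hx)
  have hεh : Tendsto (fun n => ε * h n) atTop (nhdsWithin 0 (Set.Ioi 0)) :=
    tendsto_nhdsWithin_iff.mpr
      ⟨by simpa using hhlim.const_mul ε, .of_forall fun n => mul_pos hε (hhpos n)⟩
  have hratio : ∀ᶠ n in atTop, a < P (ball x (ε * h n)) / ENNReal.ofReal ((ε * h n) ^ d) :=
    hεh.eventually (eventually_lt_of_lt_liminf ha)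
  have hbound : ∀ᶠ n in atTop, ENNReal.ofReal (K 0 / 2 * ε ^ d) * a ≤ avgKDE P K (h n) x :=
    hratio.mono fun n hn => (mul_le_mul_right hn.le _).trans
      (ofReal_mul_ball_ratio_le_avgKDE P K (hhpos n) hε hKε x)
  have hpos : 0 < ENNReal.ofReal (K 0 / 2 * ε ^ d) * a :=
    ENNReal.mul_pos (ENNReal.ofReal_pos.mpr (by positivity)).ne' ha0.ne'
  exact hpos.trans_le (le_liminf_of_le (by isBoundedDefault) hbound)

theorem stmt0 {d : ℕ} (P : Measure (EuclideanSpace ℝ (Fin d))) [IsProbabilityMeasure P]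
    (hP : ∀ x ∈ msupp P,
      0 < liminf (fun r : ℝ => P (ball x r) / ENNReal.ofReal (r ^ d))
        (nhdsWithin (0 : ℝ) (Set.Ioi 0)))
    (K : EuclideanSpace ℝ (Fin d) → ℝ) (hK0 : ∀ y, 0 ≤ K y) (hKpos : 0 < K 0)
    (hKcont : ContinuousAt K 0)
    (h : ℕ → ℝ) (hhpos : ∀ n, 0 < h n) (hhlim : Tendsto h atTop (nhds 0)) :
    ∀ x ∈ msupp P, 0 < liminf (fun n => avgKDE P K (h n) x) atTop :=
  stmt0_general P hP K hKpos hKcont h hhpos hhlim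
end

section
/- Let X and Y be real-valued random variables on a common probability space, let 0 ≤ δ < α < 1 with α + δ < 1, and suppose there exists c > 0 such that P(|X − Y| > c) ≤ δ. Then the upper quantiles satisfy q_{X,α+δ} − c ≤ q_{Y,α} ≤ q_{X,α−δ} + c. -/
open MeasureTheory

section Helpers
open Filter Topology

variable {Ω : Type*} [MeasurableSpace Ω]

lemma qset_nonempty (μ : Measure Ω) [IsProbabilityMeasure μ]
    {W : Ω → ℝ} (hW : Measurable W) {β : ℝ} (hβ : 0 < β) :
    ∃ t : ℝ, (μ {ω | t < W ω}).toReal ≤ β := by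
  have hmeas : ∀ n : ℕ, NullMeasurableSet {ω | (n : ℝ) < W ω} μ :=
    fun n => (measurableSet_lt measurable_const hW).nullMeasurableSet
  have hanti : Antitone fun n : ℕ => {ω | (n : ℝ) < W ω} := by
    intro m n hmn ω hω
    have : (m:ℝ) ≤ n := by exact_mod_cast hmn
    exact lt_of_le_of_lt this hω
  have hempty : (⋂ n : ℕ, {ω | (n : ℝ) < W ω}) = ∅ := by
    ext ω
    simp only [Set.mem_iInter, Set.mem_setOf_eq, Set.mem_empty_iff_false, iff_false, not_forall,
      not_lt]
    obtain ⟨n, hn⟩ := exists_nat_ge (W ω)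
    exact ⟨n, hn⟩
  have htend : Tendsto (fun n : ℕ => μ {ω | (n : ℝ) < W ω}) atTop (𝓝 0) := by
    have := tendsto_measure_iInter_atTop (μ := μ) hmeas hanti ⟨0, measure_ne_top μ _⟩
    rwa [hempty, measure_empty] at this
  have : ∀ᶠ n : ℕ in atTop, μ {ω | (n : ℝ) < W ω} < ENNReal.ofReal β := by
    exact htend.eventually_lt_const (by simpa using hβ)
  obtain ⟨n, hn⟩ := this.exists
  refine ⟨n, ?_⟩
  calc (μ {ω | (n:ℝ) < W ω}).toReal ≤ (ENNReal.ofReal β).toReal :=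
        ENNReal.toReal_mono (by simp) hn.le
    _ = β := ENNReal.toReal_ofReal hβ.le

lemma qset_bddBelow (μ : Measure Ω) [IsProbabilityMeasure μ]
    {W : Ω → ℝ} (hW : Measurable W) {β : ℝ} (hβ : β < 1) :
    BddBelow {t : ℝ | (μ {ω | t < W ω}).toReal ≤ β} := by
  have hmono : Monotone fun n : ℕ => {ω | -(n : ℝ) < W ω} := by
    intro m n hmn ω hω
    simp only [Set.mem_setOf_eq] at hω ⊢
    have : (m:ℝ) ≤ n := by exact_mod_cast hmn
    linarith
  have huniv : (⋃ n : ℕ, {ω | -(n : ℝ) < W ω}) = Set.univ := by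
    ext ω
    simp only [Set.mem_iUnion, Set.mem_setOf_eq, Set.mem_univ, iff_true]
    obtain ⟨n, hn⟩ := exists_nat_gt (-(W ω))
    exact ⟨n, by linarith⟩
  have htend : Tendsto (fun n : ℕ => μ {ω | -(n : ℝ) < W ω}) atTop (𝓝 1) := by
    have := tendsto_measure_iUnion_atTop (μ := μ) hmono
    rwa [huniv, measure_univ] at this
  have : ∀ᶠ n : ℕ in atTop, ENNReal.ofReal β < μ {ω | -(n : ℝ) < W ω} :=
    htend.eventually_const_lt (by
      rw [show (1:ENNReal) = ENNReal.ofReal 1 by simp]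
      exact (ENNReal.ofReal_lt_ofReal_iff one_pos).mpr hβ)
  obtain ⟨n, hn⟩ := this.exists
  refine ⟨-(n : ℝ), fun t ht => ?_⟩
  by_contra h
  push_neg at h
  have hsub : {ω | -(n : ℝ) < W ω} ⊆ {ω | t < W ω} :=
    fun ω hω => lt_trans h hω
  have : ENNReal.ofReal β < μ {ω | t < W ω} := lt_of_lt_of_le hn (measure_mono hsub)
  have h2 : β < (μ {ω | t < W ω}).toReal := by
    rcases le_or_gt β 0 with hβ0 | hβ0
    · exact lt_of_le_of_lt hβ0 (by
        have : μ {ω | t < W ω} ≠ 0 := by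
          intro h0; rw [h0] at this; simp at this
        exact ENNReal.toReal_pos this (measure_ne_top μ _))
    · rw [← ENNReal.toReal_ofReal hβ0.le]
      exact ENNReal.toReal_strict_mono (measure_ne_top μ _) this
  exact absurd ht (not_le.mpr h2)

lemma shift_ineq (μ : Measure Ω) [IsProbabilityMeasure μ]
    (X Y : Ω → ℝ) (c t : ℝ) :
    (μ {ω | t < Y ω}).toReal ≤
      (μ {ω | t - c < X ω}).toReal + (μ {ω | c < |X ω - Y ω|}).toReal := by
  have hsub : {ω | t < Y ω} ⊆ {ω | t - c < X ω} ∪ {ω | c < |X ω - Y ω|} := by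
    intro ω hω
    by_cases h : t - c < X ω
    · exact Or.inl h
    · right
      push_neg at h
      simp only [Set.mem_setOf_eq] at hω ⊢
      rw [abs_sub_comm]
      calc c < Y ω - t + c := by linarith
        _ ≤ Y ω - X ω := by linarith
        _ ≤ |Y ω - X ω| := le_abs_self _
  calc (μ {ω | t < Y ω}).toReal
      ≤ (μ ({ω | t - c < X ω} ∪ {ω | c < |X ω - Y ω|})).toReal :=
        ENNReal.toReal_mono (measure_ne_top μ _) (measure_mono hsub)
    _ ≤ (μ {ω | t - c < X ω} + μ {ω | c < |X ω - Y ω|}).toReal :=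
        ENNReal.toReal_mono (by simp [ENNReal.add_ne_top, measure_ne_top]) (measure_union_le _ _)
    _ = _ := ENNReal.toReal_add (measure_ne_top μ _) (measure_ne_top μ _)

end Helpers

/-- The upper `β`-quantile of a real random variable `W` on `(Ω, μ)`:
`q_{W,β} = inf { t : ℝ | μ(W > t) ≤ β }`. -/
noncomputable def upperQuantile {Ω : Type*} [MeasurableSpace Ω] (μ : Measure Ω)
    (W : Ω → ℝ) (β : ℝ) : ℝ :=
  sInf {t : ℝ | (μ {ω | t < W ω}).toReal ≤ β}

theorem stmt3 {Ω : Type*} [MeasurableSpace Ω] (μ : Measure Ω) [IsProbabilityMeasure μ]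
    (X Y : Ω → ℝ) (hX : Measurable X) (hY : Measurable Y)
    (α δ : ℝ) (hδ0 : 0 ≤ δ) (hδα : δ < α) (hα1 : α < 1) (hαδ1 : α + δ < 1)
    (c : ℝ) (hc : 0 < c)
    (hclose : (μ {ω | c < |X ω - Y ω|}).toReal ≤ δ) :
    upperQuantile μ X (α + δ) - c ≤ upperQuantile μ Y α ∧
      upperQuantile μ Y α ≤ upperQuantile μ X (α - δ) + c := by
  have hclose' : (μ {ω | c < |Y ω - X ω|}).toReal ≤ δ := by
    have h : {ω | c < |Y ω - X ω|} = {ω | c < |X ω - Y ω|} := by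
      ext ω; simp [abs_sub_comm]
    rwa [h]
  constructor
  · -- q_X(α+δ) - c ≤ q_Y(α)
    have hbddX : BddBelow {t : ℝ | (μ {ω | t < X ω}).toReal ≤ α + δ} :=
      qset_bddBelow μ hX hαδ1
    have hneY : {t : ℝ | (μ {ω | t < Y ω}).toReal ≤ α}.Nonempty :=
      qset_nonempty μ hY (lt_of_le_of_lt hδ0 hδα)
    rw [sub_le_iff_le_add]
    have key : ∀ t ∈ {t : ℝ | (μ {ω | t < Y ω}).toReal ≤ α},
        upperQuantile μ X (α + δ) - c ≤ t := by
      intro t ht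
      have hmem : t + c ∈ {s : ℝ | (μ {ω | s < X ω}).toReal ≤ α + δ} := by
        have := shift_ineq μ Y X c (t + c)
        simp only [add_sub_cancel_right] at this
        simp only [Set.mem_setOf_eq] at ht ⊢
        linarith
      have := csInf_le hbddX hmem
      unfold upperQuantile
      linarith
    have := le_csInf hneY key
    unfold upperQuantile at *
    linarith
  · -- q_Y(α) ≤ q_X(α-δ) + c
    have hbddY : BddBelow {t : ℝ | (μ {ω | t < Y ω}).toReal ≤ α} :=
      qset_bddBelow μ hY hα1
    have hneX : {t : ℝ | (μ {ω | t < X ω}).toReal ≤ α - δ}.Nonempty :=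
      qset_nonempty μ hX (by linarith)
    have key : ∀ t ∈ {t : ℝ | (μ {ω | t < X ω}).toReal ≤ α - δ},
        upperQuantile μ Y α - c ≤ t := by
      intro t ht
      have hmem : t + c ∈ {s : ℝ | (μ {ω | s < Y ω}).toReal ≤ α} := by
        have := shift_ineq μ X Y c (t + c)
        simp only [add_sub_cancel_right] at this
        simp only [Set.mem_setOf_eq] at ht ⊢
        linarith
      have := csInf_le hbddY hmem
      unfold upperQuantile
      linarith
    have := le_csInf hneX key
    unfold upperQuantile at *
    linarith
end

section
/- Let μ be a finite nonnegative measure on a measurable space, and let L_P ⊆ Ŝ_P ⊆ U_P, L_Q ⊆ Ŝ_Q ⊆ U_Q, and S_P, S_Q be measurable sets with L_P ⊆ S_P ⊆ U_P and L_Q ⊆ S_Q ⊆ U_Q. Then |μ(Ŝ_P ∩ Ŝ_Q) − μ(S_P ∩ S_Q)| ≤ max{ μ(S_P \ L_P) + μ(S_Q \ L_Q), μ(U_P \ S_P) + μ(U_Q \ S_Q) }. -/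
/-! Whatever of `s ∩ t` is missing from `s' ∩ t'` lies in `s \ s'` or in `t \ t'`, and vice versa.
Taking `(s, t) = (Ŝ_P, Ŝ_Q)` and `(s', t') = (S_P, S_Q)`, the sandwiches put `Ŝ \ S` inside `U \ S`
and `S \ Ŝ` inside `S \ L`, which bounds the two signed differences by the two terms of the max. -/

open MeasureTheory Set

theorem Set.inter_subset_inter_union_diff_union_diff {α : Type*} (s t s' t' : Set α) :
    s ∩ t ⊆ s' ∩ t' ∪ s \ s' ∪ t \ t' := by
  intro x ⟨hs, ht⟩
  by_cases hs' : x ∈ s' <;> by_cases ht' : x ∈ t' <;> simp_all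

namespace MeasureTheory

theorem measureReal_inter_sub_le {Ω : Type*} [MeasurableSpace Ω] (μ : Measure Ω)
    [IsFiniteMeasure μ] (s t s' t' : Set Ω) :
    μ.real (s ∩ t) - μ.real (s' ∩ t') ≤ μ.real (s \ s') + μ.real (t \ t') := by
  have := calc
    μ.real (s ∩ t) ≤ μ.real (s' ∩ t' ∪ s \ s' ∪ t \ t') :=
      measureReal_mono (inter_subset_inter_union_diff_union_diff s t s' t')
    _ ≤ μ.real (s' ∩ t' ∪ s \ s') + μ.real (t \ t') := measureReal_union_le _ _
    _ ≤ μ.real (s' ∩ t') + μ.real (s \ s') + μ.real (t \ t') := by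
      gcongr; exact measureReal_union_le _ _
  linarith

end MeasureTheory

theorem stmt13_general {Ω : Type*} [MeasurableSpace Ω] (μ : Measure Ω) [IsFiniteMeasure μ]
    (LP SP UP SPhat LQ SQ UQ SQhat : Set Ω)
    (h1 : LP ⊆ SPhat) (h2 : SPhat ⊆ UP)
    (h5 : LQ ⊆ SQhat) (h6 : SQhat ⊆ UQ) :
    |(μ (SPhat ∩ SQhat)).toReal - (μ (SP ∩ SQ)).toReal| ≤
      max ((μ (SP \ LP)).toReal + (μ (SQ \ LQ)).toReal)
        ((μ (UP \ SP)).toReal + (μ (UQ \ SQ)).toReal) := by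
  simp only [← measureReal_def]
  rw [abs_sub_le_iff]
  constructor
  · calc μ.real (SPhat ∩ SQhat) - μ.real (SP ∩ SQ)
        ≤ μ.real (SPhat \ SP) + μ.real (SQhat \ SQ) := measureReal_inter_sub_le μ _ _ _ _
      _ ≤ μ.real (UP \ SP) + μ.real (UQ \ SQ) :=
        add_le_add (measureReal_mono (sdiff_subset_sdiff_left h2))
          (measureReal_mono (sdiff_subset_sdiff_left h6))
      _ ≤ _ := le_max_right _ _
  · calc μ.real (SP ∩ SQ) - μ.real (SPhat ∩ SQhat)
        ≤ μ.real (SP \ SPhat) + μ.real (SQ \ SQhat) := measureReal_inter_sub_le μ _ _ _ _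
      _ ≤ μ.real (SP \ LP) + μ.real (SQ \ LQ) :=
        add_le_add (measureReal_mono (sdiff_subset_sdiff_right h1))
          (measureReal_mono (sdiff_subset_sdiff_right h5))
      _ ≤ _ := le_max_left _ _

theorem stmt13 {Ω : Type*} [MeasurableSpace Ω] (μ : Measure Ω) [IsFiniteMeasure μ]
    (LP SP UP SPhat LQ SQ UQ SQhat : Set Ω)
    (hLP : MeasurableSet LP) (hSP : MeasurableSet SP) (hUP : MeasurableSet UP)
    (hSPhat : MeasurableSet SPhat)
    (hLQ : MeasurableSet LQ) (hSQ : MeasurableSet SQ) (hUQ : MeasurableSet UQ)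
    (hSQhat : MeasurableSet SQhat)
    (h1 : LP ⊆ SPhat) (h2 : SPhat ⊆ UP) (h3 : LP ⊆ SP) (h4 : SP ⊆ UP)
    (h5 : LQ ⊆ SQhat) (h6 : SQhat ⊆ UQ) (h7 : LQ ⊆ SQ) (h8 : SQ ⊆ UQ) :
    |(μ (SPhat ∩ SQhat)).toReal - (μ (SP ∩ SQ)).toReal| ≤
      max ((μ (SP \ LP)).toReal + (μ (SQ \ LQ)).toReal)
        ((μ (UP \ SP)).toReal + (μ (UQ \ SQ)).toReal) :=
  stmt13_general μ LP SP UP SPhat LQ SQ UQ SQhat h1 h2 h5 h6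
end
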